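/- arXiv:2210.01306 — 2 statements merged into one kernel-verified Lean document; each statement's English description precedes it below -/
import Mathlib

section
/- In a single-source Dijkstra-style search with the occupied-time cost (keys assigned as max(base, parent key) + τ_swap with τ_swap > 0), every vertex is dequeued with key equal to RP_opt(s, v).ocp, the minimum occupied time over all paths from the source s to v. -/
/-- Occupied-time cost of a path (walk): the cost of the path extended by an
edge `(u, v)` is `max(cost so far, max(u.base, v.base) + τ_swap)`. -/
def walkCost {V : Type*} {G : SimpleGraph V} (ocp : V → ℝ) (τswap : ℝ) :
    {s t : V} → G.Walk s t → ℝ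
  | _, _, .nil => 0
  | _, _, .cons (u := u) (v := v) _ p =>
      max (max (ocp u) (ocp v) + τswap) (walkCost ocp τswap p)

/-- `RP_opt(s, v).ocp`: minimum occupied-time cost over all paths from `s`. -/
noncomputable def rpOpt {V : Type*} (G : SimpleGraph V) (ocp : V → ℝ)
    (τswap : ℝ) (s t : V) : ℝ :=
  sInf {c | ∃ w : G.Walk s t, c = walkCost ocp τswap w}

lemma walkCost_nonneg {V : Type*} {G : SimpleGraph V} (ocp : V → ℝ) (τswap : ℝ)
    (hocp : ∀ v, 0 ≤ ocp v) (hτ : 0 ≤ τswap) {s t : V} (w : G.Walk s t) :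
    0 ≤ walkCost ocp τswap w := by
  induction w with
  | nil => simp [walkCost]
  | cons h p ih => exact le_max_of_le_right ih

lemma walkCost_concat {V : Type*} {G : SimpleGraph V} (ocp : V → ℝ) (τswap : ℝ)
    {s u t : V} (q : G.Walk s u) (h : G.Adj u t) :
    walkCost ocp τswap (q.concat h) =
      max (walkCost ocp τswap q) (max (ocp u) (ocp t) + τswap) := by
  induction q with
  | nil => simp [SimpleGraph.Walk.concat, walkCost, max_comm]
  | cons h' p ih =>
      rw [SimpleGraph.Walk.concat_cons]
      show max _ (walkCost ocp τswap (p.concat h)) = _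
      rw [ih]
      show _ = max (max _ (walkCost ocp τswap p)) _
      rw [max_assoc]

/-- in a single-source Dijkstra-style search with the
occupied-time cost (immutable keys, key of a vertex dequeued via its parent
being `max(parent key, edge swap cost)`, minimum-key dequeue), every vertex is
dequeued with key equal to `RP_opt(s, v).ocp`. -/
theorem dijkstra_key_eq_rpOpt {V : Type*} [Fintype V] [DecidableEq V]
    (G : SimpleGraph V) (hconn : G.Connected)
    (ocp : V → ℝ) (hocp : ∀ v, 0 ≤ ocp v) (τswap : ℝ) (hτ : 0 < τswap)
    (s : V) (key : V → ℝ)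
    (pos : V ≃ Fin (Fintype.card V))    -- the dequeue order
    (parent : V → V)
    (hs : (pos s : ℕ) = 0) (hkeys : key s = 0)
    -- every non-source vertex is discovered through its parent, which is
    -- dequeued earlier, and receives the immutable key
    -- `max(parent key, edge swap cost)`
    (hparent : ∀ v, v ≠ s → G.Adj (parent v) v ∧
      (pos (parent v) : ℕ) < (pos v : ℕ) ∧
      key v = max (key (parent v)) (max (ocp (parent v)) (ocp v) + τswap))
    -- minimum-key dequeue: when `v` is dequeued, its key does not exceed the
    -- key any frontier vertex would get from an already-dequeued neighbor
    (hmin : ∀ v, v ≠ s → ∀ u w, (pos u : ℕ) < (pos v : ℕ) →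
      (pos v : ℕ) ≤ (pos w : ℕ) → G.Adj u w →
      key v ≤ max (key u) (max (ocp u) (ocp w) + τswap))
    (hmono : ∀ u v, (pos u : ℕ) ≤ (pos v : ℕ) → key u ≤ key v) :
    ∀ v : V, key v = rpOpt G ocp τswap s v := by
  -- lower bound: key t ≤ cost of any walk from s to t
  have key_le : ∀ n (t : V), (pos t : ℕ) < n →
      ∀ w : G.Walk s t, key t ≤ walkCost ocp τswap w := by
    intro n
    induction n with
    | zero => intro t ht; omega
    | succ n ih =>
        intro t ht w
        by_cases hts : t = s
        · subst hts
          rw [hkeys]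
          exact walkCost_nonneg ocp τswap hocp hτ.le w
        · have inner : ∀ (a u : V) (q : G.Walk a u), a = s →
              (pos t : ℕ) ≤ (pos u : ℕ) → key t ≤ walkCost ocp τswap q := by
            intro a u q
            induction q using SimpleGraph.Walk.concatRec with
            | Hnil =>
                intro ha hq
                subst ha
                exact absurd (pos.injective (Fin.ext (by omega))) hts
            | Hconcat r h ihq =>
                intro ha hq
                subst ha
                rename_i a0 x u'
                rw [walkCost_concat]
                by_cases hx : (pos t : ℕ) ≤ (pos x : ℕ)
                · exact le_max_of_le_left (ihq rfl hx)
                · refine le_trans (hmin t hts x u' (by omega) hq h) ?_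
                  have hkx : key x ≤ walkCost ocp τswap r := ih x (by omega) r
                  exact max_le_max hkx le_rfl
          exact inner s t w rfl le_rfl
  -- exact walk achieving the key
  have exists_walk : ∀ n (t : V), (pos t : ℕ) < n →
      ∃ w : G.Walk s t, walkCost ocp τswap w = key t := by
    intro n
    induction n with
    | zero => intro t ht; omega
    | succ n ih =>
        intro t ht
        by_cases hts : t = s
        · subst hts
          exact ⟨.nil, by simp [walkCost, hkeys]⟩
        · obtain ⟨hadj, hlt, hkey⟩ := hparent t hts
          obtain ⟨w, hw⟩ := ih (parent t) (by omega)
          refine ⟨w.concat hadj, ?_⟩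
          rw [walkCost_concat, hw]
          exact hkey.symm
  intro v
  obtain ⟨w0, hw0⟩ := exists_walk ((pos v : ℕ) + 1) v (by omega)
  have hlb : ∀ c ∈ {c | ∃ w : G.Walk s v, c = walkCost ocp τswap w}, key v ≤ c := by
    rintro c ⟨w, rfl⟩
    exact key_le ((pos v : ℕ) + 1) v (by omega) w
  have hmem : key v ∈ {c | ∃ w : G.Walk s v, c = walkCost ocp τswap w} := ⟨w0, hw0.symm⟩
  exact le_antisymm (le_csInf ⟨key v, hmem⟩ hlb) (csInf_le ⟨key v, hlb⟩ hmem)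
end

section
/- If the SWAPs along a routing path are executed sequentially from the source, then the final occupied time of the path of length k satisfies RP.ocp ≥ c_min + k·τ_swap and RP.ocp ≤ c_max + k·τ_swap, where c_min and c_max are the minimum and maximum initial occupied times of vertices on the path. -/
/-- Sequential occupied-time cost of a routing path: executing a SWAP on the
edge `(u, v)` sets both endpoints' occupied times to `max(f u, f v) + τ_swap`;
SWAPs are executed in order along the path, and the result is the occupied
time after the last SWAP. -/
def seqCost {V : Type*} [DecidableEq V] (τswap : ℝ) : (V → ℝ) → V → List V → ℝ
  | f, u, [] => f u
  | f, u, v :: rest =>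
      seqCost τswap
        (fun x => if x = u ∨ x = v then max (f u) (f v) + τswap else f x) v rest

theorem seqCost_lower {V : Type*} [DecidableEq V]
    (τswap : ℝ) (l : List V) :
    ∀ (f : V → ℝ) (s : V), f s + l.length * τswap ≤ seqCost τswap f s l := by
  induction l with
  | nil => intro f s; simp [seqCost]
  | cons v rest ih =>
      intro f s
      have h := ih (fun x => if x = s ∨ x = v then max (f s) (f v) + τswap else f x) v
      simp only [or_true, if_true] at h
      simp only [seqCost, List.length_cons]
      push_cast
      calc f s + (rest.length + 1) * τswap
          ≤ (max (f s) (f v) + τswap) + rest.length * τswap := by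
            have := le_max_left (f s) (f v); push_cast; ring_nf; linarith
        _ ≤ _ := h

theorem seqCost_upper {V : Type*} [DecidableEq V]
    (τswap : ℝ) (hτ : 0 < τswap) (l : List V) :
    ∀ (f : V → ℝ) (s : V) (B : ℝ), (∀ q ∈ s :: l, f q ≤ B) →
      seqCost τswap f s l ≤ B + l.length * τswap := by
  induction l with
  | nil => intro f s B hB; simpa [seqCost] using hB s (by simp)
  | cons v rest ih =>
      intro f s B hB
      have h := ih (fun x => if x = s ∨ x = v then max (f s) (f v) + τswap else f x)
        v (B + τswap) ?_
      · simp only [seqCost, List.length_cons]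
        calc seqCost τswap _ v rest ≤ (B + τswap) + rest.length * τswap := h
          _ = B + (rest.length + 1) * τswap := by ring
          _ ≤ _ := by push_cast; linarith
      · intro q hq
        by_cases hc : q = s ∨ q = v
        · simp only [if_pos hc]
          have h1 : f s ≤ B := hB s (by simp)
          have h2 : f v ≤ B := hB v (by simp)
          have := max_le h1 h2; linarith
        · simp only [if_neg hc]
          have : f q ≤ B := hB q (by right; exact hq)
          linarith

/-- if every vertex on a routing path with `k ≥ 1` edges has
initial occupied time in `[c_min, c_max]`, then the final occupied time
satisfies `c_min + k·τ_swap ≤ RP.ocp ≤ c_max + k·τ_swap`. -/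
theorem seqCost_bounds {V : Type*} [DecidableEq V]
    (τswap : ℝ) (hτ : 0 < τswap) (cmin cmax : ℝ)
    (f : V → ℝ) (s : V) (l : List V) (hl : l ≠ [])
    (hbounds : ∀ q ∈ s :: l, cmin ≤ f q ∧ f q ≤ cmax) :
    cmin + l.length * τswap ≤ seqCost τswap f s l ∧
    seqCost τswap f s l ≤ cmax + l.length * τswap := by
  constructor
  · have h := seqCost_lower τswap l f s
    have : cmin ≤ f s := (hbounds s (by simp)).1
    linarith
  · exact seqCost_upper τswap hτ l f s cmax (fun q hq => (hbounds q hq).2)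
end
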